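/- arXiv:2412.03694 — 3 statements merged into one kernel-verified Lean document; each statement's English description precedes it below -/
import Mathlib

section
/- Fix r ≥ 1 and real parameters a_1,…,a_r such that a_i − a_j ∉ ℤ for i ≠ j and no a_j is a negative integer. Let (v_1,…,v_r) be the linear functionals on ℂ[x] with moments ⟨v_j, x^n⟩ = (a_j+1)_n (the normalised multiple Laguerre system of the first kind). Define a*_0 := −1 and a*_{rn+j} := a_j + n for n ∈ ℕ and 1 ≤ j ≤ r, and define α̂ : ℕ → ℂ by α̂_{(r+1)(rm+k)+i} := a*_{k+i+1} − a*_i + m for m ∈ ℕ, 0 ≤ k ≤ r−1, 0 ≤ i ≤ r. Let Ĥ := L_1 ⋯ L_r U built from (α̂_n). Then there is a unique monic polynomial sequence (P̂_n) with deg P̂_n = n satisfying the type II step-line orthogonality conditions with respect to (v_1,…,v_r), and it satisfies x P̂_n(x) = Σ_{ℓ=0}^{n+1} Ĥ_{n,ℓ} P̂_ℓ(x) for all n ∈ ℕ; that is, the Hessenberg recurrence matrix of the multiple Laguerre polynomials of the first kind on the step-line admits the bidiagonal factorisation Ĥ = L_1 ⋯ L_r U. -/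
open Polynomial Finset

noncomputable section

/-- A linear functional on `ℂ[x]`. -/
abbrev LF := Polynomial ℂ →ₗ[ℂ] ℂ

/-- The Pochhammer symbol `(z)_n = z(z+1)⋯(z+n−1)`. -/
def poch (z : ℂ) (n : ℕ) : ℂ := ∏ i ∈ Finset.range n, (z + i)

/-- The upper-bidiagonal matrix `U`: `U_{n,n} = α_{(r+1)n}`, `U_{n,n+1} = 1`. -/
def Umat (r : ℕ) (α : ℕ → ℂ) : ℕ → ℕ → ℂ := fun n ℓ =>
  if ℓ = n then α ((r + 1) * n) else if ℓ = n + 1 then 1 else 0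

/-- The lower-bidiagonal matrix `L_k`: `(L_k)_{n,n} = 1`, `(L_k)_{n+1,n} = α_{(r+1)n+k}`. -/
def Lmat (r k : ℕ) (α : ℕ → ℂ) : ℕ → ℕ → ℂ := fun n ℓ =>
  if ℓ = n then 1 else if n = ℓ + 1 then α ((r + 1) * ℓ + k) else 0

/-- Entrywise product (finite sum, as the left factors have row `n`
supported in columns `< n+2`). -/
def bidMul (X Y : ℕ → ℕ → ℂ) : ℕ → ℕ → ℂ := fun n ℓ =>
  ∑ k ∈ Finset.range (n + 2), X n k * Y k ℓ

/-- Product of a list of such matrices. -/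
def listProd : List (ℕ → ℕ → ℂ) → ℕ → ℕ → ℂ
  | [] => fun n ℓ => if n = ℓ then 1 else 0
  | X :: rest => bidMul X (listProd rest)

/-- The Hessenberg matrix `H = L_1 ⋯ L_r U`. -/
def Hprod (r : ℕ) (α : ℕ → ℂ) : ℕ → ℕ → ℂ :=
  listProd (((List.range' 1 r).map fun k => Lmat r k α) ++ [Umat r α])

/-- `P` is the sequence of monic type II multiple orthogonal polynomials on
the step-line with respect to the system `v`. -/
def TypeII (r : ℕ) (v : ℕ → LF) (P : ℕ → Polynomial ℂ) : Prop :=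
  ∀ n, (P n).Monic ∧ (P n).natDegree = n ∧
    ∀ k j, j < r → r * k + j < n → v j (Polynomial.X ^ k * P n) = 0

/-- `a*_0 := −1` and `a*_{rn+j} := a_j + n` for `n ∈ ℕ`, `1 ≤ j ≤ r`. -/
def aStar (r : ℕ) (a : ℕ → ℝ) (m : ℕ) : ℝ :=
  if m = 0 then -1 else a ((m - 1) % r + 1) + ((m - 1) / r : ℕ)

/-- The multiple Laguerre (first kind) coefficients
`α̂_{(r+1)(rm+k)+i} = a*_{k+i+1} − a*_i + m`. -/
def alphaLag (r : ℕ) (a : ℕ → ℝ) (n : ℕ) : ℂ :=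
  let i := n % (r + 1)
  let s := n / (r + 1)
  let k := s % r
  let m := s / r
  ((aStar r a (k + i + 1) - aStar r a i + m : ℝ) : ℂ)

/-!
Take the Hessenberg recurrence `x P̂ₙ = ∑ₗ Ĥₙₗ P̂ₗ` as the definition of `P̂` (possible because
`Ĥₙ,ₙ₊₁ = 1`) and pair it with the step-line functionals `u_{rk+j} = v_j(xᵏ ·)`, which satisfy
`u_m(x p) = u_{m+r}(p)`. With `A = a*` and the Newton basis `πₗ(z) = ∏_{t<ℓ} (z - A_{t+1})`, the
product `L₁ ⋯ L_r U` sends `(πₗ(z))ₗ` to `((z + 1) πₙ(z + 1))ₙ`: `U` multiplies the basis by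
`z - A₀ = z + 1`, the periodicity `A_{p+r} = A_p + 1` rewrites `πₙ(z)` as the Newton polynomial at
`z + 1` with nodes shifted by `r`, and each `L_k` moves the nodes back by one. Together with
`u_{m+r}(1) = (A_{m+1} + 1) u_m(1)` this gives `u_m(P̂ₙ) = u_m(1) πₙ(A_{m+1})`, which vanishes for
`m < n`. For `m = n` it does not, because `a*` is injective on positive indices and no `a_j` is a
negative integer, and this triangularity makes the orthogonality conditions determine the monic
sequence uniquely.
-/

structure IsLowerUnitriangular (M : ℕ → ℕ → ℂ) : Prop where
  eq_zero : ∀ n k, n < k → M n k = 0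
  diag : ∀ n, M n n = 1

structure IsUnitHessenberg (M : ℕ → ℕ → ℂ) : Prop where
  eq_zero : ∀ n ℓ, n + 1 < ℓ → M n ℓ = 0
  superdiag : ∀ n, M n (n + 1) = 1

lemma IsUnitHessenberg.bidMul {X Y : ℕ → ℕ → ℂ} (hX : IsLowerUnitriangular X)
    (hY : IsUnitHessenberg Y) : IsUnitHessenberg (bidMul X Y) where
  eq_zero n ℓ h := sum_eq_zero fun k _ => by
    rcases le_or_gt k n with hk | hk
    · rw [hY.eq_zero k ℓ (by omega), mul_zero]
    · rw [hX.eq_zero n k hk, zero_mul]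
  superdiag n := by
    rw [_root_.bidMul, sum_eq_single n, hX.diag, hY.superdiag, one_mul]
    · intro k _ hk
      rcases lt_or_gt_of_ne hk with hk | hk
      · rw [hY.eq_zero k (n + 1) (by omega), mul_zero]
      · rw [hX.eq_zero n k hk, zero_mul]
    · simp

lemma listProd_singleton {Y : ℕ → ℕ → ℂ} (hY : ∀ n ℓ, n + 1 < ℓ → Y n ℓ = 0) :
    listProd [Y] = Y := by
  ext n ℓ
  simp only [listProd, bidMul, mul_ite, mul_one, mul_zero, sum_ite_eq', mem_range]
  split_ifs with h
  · rfl
  · exact (hY n ℓ (by omega)).symm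

lemma IsUnitHessenberg.listProd_append {Ms : List (ℕ → ℕ → ℂ)} {U : ℕ → ℕ → ℂ}
    (hMs : ∀ M ∈ Ms, IsLowerUnitriangular M) (hU : IsUnitHessenberg U) :
    IsUnitHessenberg (listProd (Ms ++ [U])) := by
  induction Ms with
  | nil => rwa [List.nil_append, listProd_singleton hU.eq_zero]
  | cons M Ms ih =>
    exact (ih fun M' hM' => hMs M' (List.mem_cons_of_mem _ hM')).bidMul (hMs M List.mem_cons_self)

lemma Lmat_isLowerUnitriangular (r k : ℕ) (α : ℕ → ℂ) : IsLowerUnitriangular (Lmat r k α) where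
  eq_zero n k h := by rw [Lmat, if_neg (by omega), if_neg (by omega)]
  diag n := if_pos rfl

lemma Umat_isUnitHessenberg (r : ℕ) (α : ℕ → ℂ) : IsUnitHessenberg (Umat r α) where
  eq_zero n ℓ h := by rw [Umat, if_neg (by omega), if_neg (by omega)]
  superdiag n := by rw [Umat, if_neg (by omega), if_pos rfl]

lemma isUnitHessenberg_listProd_Lmat_Umat (r : ℕ) (α : ℕ → ℂ) (l : List ℕ) :
    IsUnitHessenberg (listProd ((l.map fun k => Lmat r k α) ++ [Umat r α])) := by
  refine .listProd_append (fun M hM => ?_) (Umat_isUnitHessenberg r α)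
  obtain ⟨k, -, rfl⟩ := List.mem_map.mp hM
  exact Lmat_isLowerUnitriangular r k α

lemma Hprod_isUnitHessenberg (r : ℕ) (α : ℕ → ℂ) : IsUnitHessenberg (Hprod r α) :=
  isUnitHessenberg_listProd_Lmat_Umat r α _

def hessMulVec (M : ℕ → ℕ → ℂ) (f : ℕ → ℂ) (n : ℕ) : ℂ :=
  ∑ ℓ ∈ range (n + 2), M n ℓ * f ℓ

lemma hessMulVec_bidMul {X Y : ℕ → ℕ → ℂ} (hX : ∀ n k, n < k → X n k = 0)
    (hY : ∀ n ℓ, n + 1 < ℓ → Y n ℓ = 0) (f : ℕ → ℂ) (n : ℕ) :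
    hessMulVec (bidMul X Y) f n = hessMulVec X (hessMulVec Y f) n := by
  simp only [hessMulVec, bidMul, sum_mul, mul_sum]
  rw [sum_comm]
  refine sum_congr rfl fun k hk => ?_
  rcases le_or_gt k n with hkn | hkn
  · simp only [mul_assoc]
    refine (sum_subset (fun ℓ hℓ => ?_) fun ℓ _ hℓ => ?_).symm
    · simp only [mem_range] at hℓ ⊢; omega
    · rw [hY k ℓ (by simp at hℓ; omega), zero_mul, mul_zero]
  · simp [hX n k hkn]

lemma hessMulVec_const_mul (M : ℕ → ℕ → ℂ) (a : ℂ) (f : ℕ → ℂ) (n : ℕ) :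
    hessMulVec M (fun ℓ => a * f ℓ) n = a * hessMulVec M f n := by
  simp only [hessMulVec, mul_sum]
  exact sum_congr rfl fun _ _ => by ring

def newtonProd (A : ℕ → ℂ) (z : ℂ) (n : ℕ) : ℂ := ∏ t ∈ range n, (z - A (t + 1))

lemma newtonProd_succ (A : ℕ → ℂ) (z : ℂ) (n : ℕ) :
    newtonProd A z (n + 1) = newtonProd A z n * (z - A (n + 1)) :=
  prod_range_succ _ n

lemma newtonProd_succ_eq_shift (B : ℕ → ℂ) (z : ℂ) (n : ℕ) :
    newtonProd B z (n + 1) = newtonProd (fun t => B (t + 1)) z (n + 1)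
      + (B (n + 2) - B 1) * newtonProd (fun t => B (t + 1)) z n := by
  rw [newtonProd_succ (fun t => B (t + 1)), newtonProd, prod_range_succ']
  simp only [newtonProd, zero_add]
  ring

lemma hessMulVec_Umat_newtonProd {r : ℕ} {α A : ℕ → ℂ}
    (hα : ∀ ℓ, α ((r + 1) * ℓ) = A (ℓ + 1) - A 0) (z : ℂ) (n : ℕ) :
    hessMulVec (Umat r α) (newtonProd A z) n = (z - A 0) * newtonProd A z n := by
  rw [hessMulVec, sum_eq_add_of_mem n (n + 1) (by simp) (by simp) (by omega)]
  · rw [Umat, if_pos rfl, hα, (Umat_isUnitHessenberg r α).superdiag, newtonProd_succ]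
    ring
  · intro ℓ _ hℓ
    rw [Umat, if_neg hℓ.1, if_neg hℓ.2, zero_mul]

lemma hessMulVec_Lmat_newtonProd {r k : ℕ} {α B : ℕ → ℂ}
    (hα : ∀ ℓ, α ((r + 1) * ℓ + k) = B (ℓ + 2) - B 1) (z : ℂ) (n : ℕ) :
    hessMulVec (Lmat r k α) (newtonProd (fun t => B (t + 1)) z) n = newtonProd B z n := by
  have hL := Lmat_isLowerUnitriangular r k α
  cases n with
  | zero =>
    simp [hessMulVec, sum_range_succ, hL.diag, hL.eq_zero 0 1 one_pos, newtonProd]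
  | succ n =>
    rw [hessMulVec, sum_eq_add_of_mem n (n + 1) (mem_range.mpr (by omega)) (by simp) (by omega)]
    · rw [Lmat, if_neg (by omega), if_pos rfl, hα, hL.diag, newtonProd_succ_eq_shift B]
      ring
    · intro ℓ _ hℓ
      rw [Lmat, if_neg hℓ.2, if_neg (by omega), zero_mul]

lemma hessMulVec_listProd_newtonProd {r : ℕ} {α A : ℕ → ℂ} {c : ℂ}
    (hα : ∀ ℓ k, k ≤ r → α ((r + 1) * ℓ + k) = A (ℓ + k + 1) - A k)
    (hA : ∀ p, 1 ≤ p → A (p + r) = A p + c) (z : ℂ) (d : ℕ) :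
    ∀ k, k + d = r → ∀ n,
      hessMulVec (listProd (((List.range' (k + 1) d).map fun j => Lmat r j α) ++ [Umat r α]))
        (newtonProd A z) n = (z - A 0) * newtonProd (fun t => A (k + t)) (z + c) n := by
  induction d with
  | zero =>
    intro k hk n
    obtain rfl : k = r := hk
    rw [List.range'_zero, List.map_nil, List.nil_append,
      listProd_singleton (Umat_isUnitHessenberg k α).eq_zero,
      hessMulVec_Umat_newtonProd (fun ℓ => by simpa using hα ℓ 0 (Nat.zero_le _))]
    congr 1
    refine prod_congr rfl fun t _ => ?_
    show z - A (t + 1) = z + c - A (k + (t + 1))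
    rw [add_comm k, hA _ (Nat.le_add_left 1 t)]
    ring
  | succ d ih =>
    intro k hk n
    have hY := isUnitHessenberg_listProd_Lmat_Umat r α (List.range' (k + 2) d)
    have hL := Lmat_isLowerUnitriangular r (k + 1) α
    rw [show List.range' (k + 1) (d + 1) = (k + 1) :: List.range' (k + 2) d from rfl,
      List.map_cons, List.cons_append, listProd, hessMulVec_bidMul hL.eq_zero hY.eq_zero,
      funext (ih (k + 1) (by omega)), hessMulVec_const_mul]
    have hα' : ∀ ℓ, α ((r + 1) * ℓ + (k + 1)) = A (k + (ℓ + 2)) - A (k + 1) := fun ℓ => by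
      rw [hα ℓ (k + 1) (by omega)]
      ring_nf
    have hnodes : (fun t => A (k + 1 + t)) = fun t => A (k + (t + 1)) :=
      funext fun t => by rw [add_right_comm, add_assoc]
    rw [hnodes, hessMulVec_Lmat_newtonProd (B := fun t => A (k + t)) hα']

lemma hessMulVec_Hprod_newtonProd {r : ℕ} {α A : ℕ → ℂ} {c : ℂ}
    (hα : ∀ ℓ k, k ≤ r → α ((r + 1) * ℓ + k) = A (ℓ + k + 1) - A k)
    (hA : ∀ p, 1 ≤ p → A (p + r) = A p + c) (z : ℂ) (n : ℕ) :
    hessMulVec (Hprod r α) (newtonProd A z) n = (z - A 0) * newtonProd A (z + c) n := by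
  unfold Hprod
  simpa only [zero_add] using hessMulVec_listProd_newtonProd hα hA z r 0 (zero_add r) n

lemma aStar_succ (r : ℕ) (a : ℕ → ℝ) (m : ℕ) :
    aStar r a (m + 1) = a (m % r + 1) + (m / r : ℕ) := by
  simp [aStar]

lemma aStar_add_mul {r : ℕ} (hr : 1 ≤ r) (a : ℕ → ℝ) {p : ℕ} (hp : 1 ≤ p) (m : ℕ) :
    aStar r a (p + r * m) = aStar r a p + m := by
  obtain ⟨q, rfl⟩ := Nat.exists_eq_add_of_le' hp
  rw [show q + 1 + r * m = q + m * r + 1 by ring, aStar_succ, aStar_succ,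
    Nat.add_mul_mod_self_right, Nat.add_mul_div_right _ _ hr]
  push_cast
  ring

lemma alphaLag_eq {r : ℕ} (hr : 1 ≤ r) (a : ℕ → ℝ) (ℓ : ℕ) {k : ℕ} (hk : k ≤ r) :
    alphaLag r a ((r + 1) * ℓ + k) = (aStar r a (ℓ + k + 1) : ℂ) - aStar r a k := by
  have hmod : ((r + 1) * ℓ + k) % (r + 1) = k := by
    rw [Nat.mul_add_mod, Nat.mod_eq_of_lt (by omega)]
  have hdiv : ((r + 1) * ℓ + k) / (r + 1) = ℓ := by
    rw [Nat.mul_add_div (by omega), Nat.div_eq_of_lt (by omega), add_zero]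
  have hshift : aStar r a (ℓ + k + 1) = aStar r a (ℓ % r + k + 1) + (ℓ / r : ℕ) := by
    rw [← aStar_add_mul hr a (by omega)]
    congr 1
    have := Nat.mod_add_div ℓ r
    omega
  simp only [alphaLag, hmod, hdiv, hshift]
  push_cast
  ring

lemma aStar_injOn {r : ℕ} (hr : 1 ≤ r) {a : ℕ → ℝ}
    (haij : ∀ i j, 1 ≤ i → i ≤ r → 1 ≤ j → j ≤ r → i ≠ j → ∀ z : ℤ, a i - a j ≠ z)
    {p q : ℕ} (h : aStar r a (p + 1) = aStar r a (q + 1)) : p = q := by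
  rw [aStar_succ, aStar_succ] at h
  have hp := Nat.mod_lt p hr
  have hq := Nat.mod_lt q hr
  by_cases hpq : p % r = q % r
  · rw [hpq, add_right_inj, Nat.cast_inj] at h
    rw [← Nat.mod_add_div p r, ← Nat.mod_add_div q r, hpq, h]
  · refine absurd ?_ (haij (p % r + 1) (q % r + 1) (by omega) (by omega) (by omega) (by omega)
      (by omega) ((q / r : ℕ) - (p / r : ℕ) : ℤ))
    rw [Int.cast_sub, Int.cast_natCast, Int.cast_natCast]
    linarith

def laguerreMoment (r : ℕ) (a : ℕ → ℝ) (m : ℕ) : ℂ := poch ((a (m % r + 1) : ℂ) + 1) (m / r)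

lemma laguerreMoment_add {r : ℕ} (hr : 1 ≤ r) (a : ℕ → ℝ) (m : ℕ) :
    laguerreMoment r a (m + r) = ((aStar r a (m + 1) : ℂ) + 1) * laguerreMoment r a m := by
  rw [laguerreMoment, laguerreMoment, Nat.add_mod_right, Nat.add_div_right m hr, poch,
    prod_range_succ, aStar_succ, poch]
  push_cast
  ring

lemma laguerreMoment_ne_zero {r : ℕ} (hr : 1 ≤ r) {a : ℕ → ℝ}
    (hneg : ∀ j, 1 ≤ j → j ≤ r → ∀ m : ℕ, a j ≠ -(m + 1 : ℕ)) (m : ℕ) :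
    laguerreMoment r a m ≠ 0 := by
  rw [laguerreMoment, poch]
  refine prod_ne_zero_iff.mpr fun i _ hi => hneg (m % r + 1) (by omega)
    (Nat.mod_lt m hr) i ?_
  have : a (m % r + 1) + 1 + i = 0 := by exact_mod_cast hi
  push_cast
  linarith

def laguerrePairing (r : ℕ) (a : ℕ → ℝ) (m n : ℕ) : ℂ :=
  laguerreMoment r a m * newtonProd (fun p => (aStar r a p : ℂ)) (aStar r a (m + 1)) n

lemma laguerrePairing_eq_zero (r : ℕ) (a : ℕ → ℝ) {m n : ℕ} (h : m < n) :
    laguerrePairing r a m n = 0 :=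
  mul_eq_zero_of_right _ (prod_eq_zero (mem_range.mpr h) (sub_self _))

lemma laguerrePairing_self_ne_zero {r : ℕ} (hr : 1 ≤ r) {a : ℕ → ℝ}
    (haij : ∀ i j, 1 ≤ i → i ≤ r → 1 ≤ j → j ≤ r → i ≠ j → ∀ z : ℤ, a i - a j ≠ z)
    (hneg : ∀ j, 1 ≤ j → j ≤ r → ∀ m : ℕ, a j ≠ -(m + 1 : ℕ)) (n : ℕ) :
    laguerrePairing r a n n ≠ 0 := by
  refine mul_ne_zero (laguerreMoment_ne_zero hr hneg n) (prod_ne_zero_iff.mpr fun t ht h => ?_)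
  have := aStar_injOn hr haij (Complex.ofReal_injective (sub_eq_zero.mp h))
  exact (mem_range.mp ht).ne' this

lemma laguerrePairing_add {r : ℕ} (hr : 1 ≤ r) (a : ℕ → ℝ) (m n : ℕ) :
    laguerrePairing r a (m + r) n =
      hessMulVec (Hprod r (alphaLag r a)) (laguerrePairing r a m) n := by
  have hA : ∀ p, 1 ≤ p → (aStar r a (p + r) : ℂ) = aStar r a p + 1 := fun p hp => by
    simpa using congrArg Complex.ofReal (aStar_add_mul hr a hp 1)
  have key := hessMulVec_Hprod_newtonProd (A := fun p => (aStar r a p : ℂ))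
    (fun ℓ k hk => alphaLag_eq hr a ℓ hk) hA (aStar r a (m + 1)) n
  simp only [laguerrePairing, hessMulVec, mul_left_comm _ (laguerreMoment r a m), ← mul_sum]
    at key ⊢
  have h0 : (aStar r a 0 : ℂ) = -1 := by simp [aStar]
  rw [key, laguerreMoment_add hr, add_right_comm, hA _ (Nat.le_add_left 1 m), h0]
  ring

def stepFunctional (r : ℕ) (v : ℕ → LF) (m : ℕ) : LF :=
  v (m % r) ∘ₗ LinearMap.mulLeft ℂ (X ^ (m / r))

lemma stepFunctional_apply (r : ℕ) (v : ℕ → LF) (m : ℕ) (p : ℂ[X]) :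
    stepFunctional r v m p = v (m % r) (X ^ (m / r) * p) := rfl

lemma stepFunctional_X_mul {r : ℕ} (hr : 1 ≤ r) (v : ℕ → LF) (m : ℕ) (p : ℂ[X]) :
    stepFunctional r v m (X * p) = stepFunctional r v (m + r) p := by
  rw [stepFunctional_apply, stepFunctional_apply, Nat.add_mod_right, Nat.add_div_right m hr,
    pow_succ, mul_assoc]

lemma stepFunctional_mul_add {r j : ℕ} (hj : j < r) (v : ℕ → LF) (k : ℕ) (p : ℂ[X]) :
    stepFunctional r v (r * k + j) p = v j (X ^ k * p) := by
  rw [stepFunctional_apply, Nat.mul_add_mod, Nat.mod_eq_of_lt hj, Nat.mul_add_div (by omega),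
    Nat.div_eq_of_lt hj, add_zero]

def IsMonicOrthogonal (u : ℕ → LF) (P : ℕ → ℂ[X]) : Prop :=
  ∀ n, (P n).Monic ∧ (P n).natDegree = n ∧ ∀ m < n, u m (P n) = 0

lemma typeII_iff {r : ℕ} (hr : 1 ≤ r) (v : ℕ → LF) (P : ℕ → ℂ[X]) :
    TypeII r v P ↔ IsMonicOrthogonal (stepFunctional r v) P := by
  refine forall_congr' fun n => and_congr_right' <| and_congr_right' ⟨fun h m hm => ?_,
    fun h k j hj hkj => ?_⟩
  · rw [← Nat.div_add_mod m r, stepFunctional_mul_add (Nat.mod_lt m hr)]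
    exact h _ _ (Nat.mod_lt m hr) (by rwa [Nat.div_add_mod])
  · rw [← stepFunctional_mul_add hj]
    exact h _ hkj

def hessPoly (H : ℕ → ℕ → ℂ) : ℕ → ℂ[X]
  | 0 => 1
  | n + 1 => X * hessPoly H n - ∑ ℓ : Fin (n + 1), C (H n ℓ) * hessPoly H ℓ

lemma hessPoly_succ (H : ℕ → ℕ → ℂ) (n : ℕ) :
    hessPoly H (n + 1) = X * hessPoly H n - ∑ ℓ ∈ range (n + 1), C (H n ℓ) * hessPoly H ℓ := by
  rw [hessPoly, Fin.sum_univ_eq_sum_range (fun ℓ => C (H n ℓ) * hessPoly H ℓ)]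

lemma hessPoly_monic_natDegree (H : ℕ → ℕ → ℂ) (n : ℕ) :
    (hessPoly H n).Monic ∧ (hessPoly H n).natDegree = n := by
  induction n using Nat.strong_induction_on with
  | _ n ih =>
    cases n with
    | zero => rw [hessPoly]; exact ⟨monic_one, natDegree_one⟩
    | succ n =>
      obtain ⟨hmon, hdeg⟩ := ih n n.lt_succ_self
      have hXP : (X * hessPoly H n).degree = ↑(n + 1) := by
        rw [X_mul, degree_mul_X, degree_eq_natDegree hmon.ne_zero, hdeg]; rfl
      have hsum : (∑ ℓ ∈ range (n + 1), C (H n ℓ) * hessPoly H ℓ).degree < ↑(n + 1) := by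
        rw [← mem_degreeLT]
        refine Submodule.sum_mem _ fun ℓ hℓ => ?_
        rw [C_mul']
        refine Submodule.smul_mem _ _ (mem_degreeLT.mpr ?_)
        rw [degree_eq_natDegree (ih ℓ (by simpa using hℓ)).1.ne_zero,
          (ih ℓ (by simpa using hℓ)).2]
        exact_mod_cast mem_range.mp hℓ
      rw [← hXP] at hsum
      rw [hessPoly_succ]
      exact ⟨(monic_X.mul hmon).sub_of_left hsum,
        natDegree_eq_of_degree_eq_some ((degree_sub_eq_left_of_degree_lt hsum).trans hXP)⟩

lemma X_mul_hessPoly {H : ℕ → ℕ → ℂ} (hH : ∀ n, H n (n + 1) = 1) (n : ℕ) :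
    X * hessPoly H n = ∑ ℓ ∈ range (n + 2), C (H n ℓ) * hessPoly H ℓ := by
  rw [sum_range_succ, hH, C_1, one_mul, hessPoly_succ]
  ring

lemma IsMonicOrthogonal.eq_zero_of_degree_lt {u : ℕ → LF} {P : ℕ → ℂ[X]}
    (hP : IsMonicOrthogonal u P) (hPn : ∀ n, u n (P n) ≠ 0) {n : ℕ} {q : ℂ[X]}
    (hq : q.degree < n) (hu : ∀ m < n, u m q = 0) : q = 0 := by
  induction n generalizing q with
  | zero => exact degree_eq_bot.mp (Nat.WithBot.lt_zero_iff.mp (by exact_mod_cast hq))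
  | succ n ih =>
    obtain ⟨hmon, hdeg, horth⟩ := hP n
    set q' := q - C (q.coeff n) * P n
    have hq' : q'.degree < n := by
      refine degree_lt_iff_coeff_zero _ _ |>.mpr fun k hk => ?_
      have hk : n ≤ k := by exact_mod_cast hk
      rw [coeff_sub, coeff_C_mul]
      rcases hk.eq_or_lt with rfl | hk
      · have hlead : (P n).coeff n = 1 := by simpa [hdeg] using hmon.coeff_natDegree
        rw [hlead, mul_one, sub_self]
      · have hqk : q.coeff k = 0 := coeff_eq_zero_of_degree_lt (hq.trans_le (by exact_mod_cast hk))
        have hPk : (P n).coeff k = 0 := coeff_eq_zero_of_natDegree_lt (by rwa [hdeg])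
        rw [hqk, hPk, mul_zero, sub_self]
    have hq'0 : q' = 0 := ih hq' fun m hm => by
      rw [map_sub, C_mul', map_smul, hu m (by omega), horth m hm, smul_zero, sub_zero]
    have hqP : q = C (q.coeff n) * P n := sub_eq_zero.mp hq'0
    have hcoeff : q.coeff n = 0 := by
      have := hu n n.lt_succ_self
      rw [hqP, C_mul', map_smul, smul_eq_mul] at this
      exact (mul_eq_zero.mp this).resolve_right (hPn n)
    rw [hqP, hcoeff, C_0, zero_mul]

lemma IsMonicOrthogonal.eq {u : ℕ → LF} {P Q : ℕ → ℂ[X]} (hP : IsMonicOrthogonal u P)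
    (hPn : ∀ n, u n (P n) ≠ 0) (hQ : IsMonicOrthogonal u Q) : Q = P := by
  funext n
  obtain ⟨hQmon, hQdeg, hQorth⟩ := hQ n
  obtain ⟨hPmon, hPdeg, hPorth⟩ := hP n
  have hdeg : (Q n - P n).degree < n := by
    have h := degree_sub_lt_left (p := Q n) (q := P n) (by rw [degree_eq_natDegree hQmon.ne_zero,
      degree_eq_natDegree hPmon.ne_zero, hQdeg, hPdeg]) hQmon.ne_zero
      (by rw [hQmon.leadingCoeff, hPmon.leadingCoeff])
    rwa [degree_eq_natDegree hQmon.ne_zero, hQdeg] at h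
  refine sub_eq_zero.mp (hP.eq_zero_of_degree_lt hPn hdeg fun m hm => ?_)
  rw [map_sub, hQorth m hm, hPorth m hm, sub_zero]

lemma stepFunctional_hessPoly {r : ℕ} (hr : 1 ≤ r) {a : ℕ → ℝ} {v : ℕ → LF}
    (hv : ∀ j, j < r → ∀ n, v j (X ^ n) = poch ((a (j + 1) : ℂ) + 1) n) (n m : ℕ) :
    stepFunctional r v m (hessPoly (Hprod r (alphaLag r a)) n) = laguerrePairing r a m n := by
  induction n using Nat.strong_induction_on generalizing m with
  | _ n ih =>
    cases n with
    | zero =>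
      rw [hessPoly, stepFunctional_apply, mul_one, hv _ (Nat.mod_lt m hr), laguerrePairing,
        newtonProd, prod_range_zero, mul_one, laguerreMoment]
    | succ n =>
      have hH := (Hprod_isUnitHessenberg r (alphaLag r a)).superdiag n
      rw [hessPoly_succ, map_sub, stepFunctional_X_mul hr, ih n n.lt_succ_self, map_sum,
        laguerrePairing_add hr, hessMulVec, sum_range_succ, hH, one_mul]
      simp only [C_mul', map_smul, smul_eq_mul]
      rw [sum_congr rfl fun ℓ hℓ => congrArg (_ * ·) (ih ℓ (by simpa using hℓ) m)]
      ring

theorem stmt17 (r : ℕ) (hr : 1 ≤ r) (a : ℕ → ℝ)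
    (haij : ∀ i j, 1 ≤ i → i ≤ r → 1 ≤ j → j ≤ r → i ≠ j → ∀ z : ℤ, a i - a j ≠ z)
    (hneg : ∀ j, 1 ≤ j → j ≤ r → ∀ m : ℕ, a j ≠ -(m + 1 : ℕ))
    (v : ℕ → LF)
    (hv : ∀ j, j < r → ∀ n, v j (Polynomial.X ^ n) = poch ((a (j + 1) : ℂ) + 1) n) :
    -- existence and uniqueness of the type II multiple Laguerre polynomials
    (∃! P : ℕ → Polynomial ℂ, TypeII r v P) ∧
    -- and the recurrence with the bidiagonally factorised Hessenberg matrix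
    (∀ P : ℕ → Polynomial ℂ, TypeII r v P →
      ∀ n, Polynomial.X * P n
        = ∑ ℓ ∈ Finset.range (n + 2),
            Polynomial.C (Hprod r (alphaLag r a) n ℓ) * P ℓ) := by
  set H := Hprod r (alphaLag r a)
  have hmoment := stepFunctional_hessPoly hr hv
  have hP : IsMonicOrthogonal (stepFunctional r v) (hessPoly H) := fun n =>
    ⟨(hessPoly_monic_natDegree H n).1, (hessPoly_monic_natDegree H n).2, fun m hm => by
      rw [hmoment, laguerrePairing_eq_zero r a hm]⟩
  have hPn : ∀ n, stepFunctional r v n (hessPoly H n) ≠ 0 := fun n => by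
    rw [hmoment]
    exact laguerrePairing_self_ne_zero hr haij hneg n
  have huniq : ∀ Q, TypeII r v Q → Q = hessPoly H := fun Q hQ =>
    hP.eq hPn ((typeII_iff hr v Q).mp hQ)
  refine ⟨⟨hessPoly H, (typeII_iff hr v _).mpr hP, huniq⟩, fun Q hQ n => ?_⟩
  rw [huniq Q hQ]
  exact X_mul_hessPoly (Hprod_isUnitHessenberg r _).superdiag n
end
end

section
/- Fix r ≥ 1 and real parameters a_1,…,a_r, b with a_i − a_j ∉ ℤ for i ≠ j and none of a_j, a_j+b+1 a negative integer, and let (α_n)_{n∈ℕ} be the coefficients of the bidiagonal factorisation of the Jacobi–Piñeiro Hessenberg recurrence matrix, given explicitly (with a_0 := −1, writing each index as n = (r+1)(rm+k)+i with m ∈ ℕ, 0 ≤ k ≤ r−1, 0 ≤ i ≤ r) by: if k+i ≤ r−1, α_n = (a_{k+i+1}−a_i+m)·∏_{j=0}^{i−1}(a_j+b+rm+k+2)·∏_{j=i+1}^{r}(a_j+b+rm+k+1) / [∏_{j=1}^{k+i+1}(a_j+b+(r+1)m+k+2)·∏_{j=k+i+1}^{r}(a_j+b+(r+1)m+k+1)],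 and if k+i ≥ r, α_n = (a_{k+i−r+1}−a_i+m+1)·∏_{j=0}^{i−1}(a_j+b+rm+k+2)·∏_{j=i+1}^{r}(a_j+b+rm+k+1) / [∏_{j=1}^{k+i+1−r}(a_j+b+(r+1)m+k+3)·∏_{j=k+i+1−r}^{r}(a_j+b+(r+1)m+k+2)]. Then α_n → r^r/(r+1)^{r+1} as n → ∞, and consequently, for each 0 ≤ k ≤ r, the entries γ_n^{[k]} := (L_1⋯L_rU)_{n+k,n} of the Hessenberg matrix built from (α_n) satisfy γ_n^{[k]} → C(r+1, k+1) · (r^r/(r+1)^{r+1})^{k+1} as n → ∞, where C(r+1, k+1) is the binomial coefficient. -/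
/-!
Along a residue class `n = (r+1)(rm+k)+i`, `α_n` is a ratio of products of affine functions
of `m`: in the numerator one factor of slope `1` and `r` of slope `r`, in the denominator `r+1`
factors of slope `r+1`. So `α_n ~ r^r m^{r+1} / ((r+1)^{r+1} m^{r+1})` on every class.

Left multiplication by `L_k` adds `α` times row `p` to row `p+1`. Hence if the entries
`Y_{n+d,n+1}` of an upper Hessenberg `Y` tend to `C(s+1,d) L^d`, those of `L_k Y` tend to
`C(s+1,d) L^d + L · C(s+1,d-1) L^{d-1} = C(s+2,d) L^d`. Starting from `U` (`s = 0`), the `r`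
factors `L_k` give `H_{n+k,n} → C(r+1,k+1) L^{k+1}`.
-/

open Polynomial Finset Filter

noncomputable section

/-- The explicit Jacobi–Piñeiro coefficients: writing `n = (r+1)(rm+k)+i`
with `0 ≤ k ≤ r−1`, `0 ≤ i ≤ r` (and `a 0 = −1`). -/
def alphaJP (r : ℕ) (a : ℕ → ℝ) (b : ℝ) (n : ℕ) : ℂ :=
  let i := n % (r + 1)
  let s := n / (r + 1)
  let k := s % r
  let m := s / r
  if k + i < r then
    (((a (k + i + 1) - a i + m)
        * (∏ j ∈ Finset.range i, (a j + b + r * m + k + 2))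
        * (∏ j ∈ Finset.Icc (i + 1) r, (a j + b + r * m + k + 1)))
      / ((∏ j ∈ Finset.Icc 1 (k + i + 1), (a j + b + (r + 1) * m + k + 2))
        * (∏ j ∈ Finset.Icc (k + i + 1) r, (a j + b + (r + 1) * m + k + 1))) : ℝ)
  else
    (((a (k + i - r + 1) - a i + m + 1)
        * (∏ j ∈ Finset.range i, (a j + b + r * m + k + 2))
        * (∏ j ∈ Finset.Icc (i + 1) r, (a j + b + r * m + k + 1)))
      / ((∏ j ∈ Finset.Icc 1 (k + i + 1 - r), (a j + b + (r + 1) * m + k + 3))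
        * (∏ j ∈ Finset.Icc (k + i + 1 - r) r, (a j + b + (r + 1) * m + k + 2))) : ℝ)

open Asymptotics Topology

lemma isEquivalent_of_affine {f : ℕ → ℝ} {ρ : ℝ} (hρ : ρ ≠ 0)
    (hf : ∀ m : ℕ, f m = f 0 + ρ * m) :
    f ~[atTop] fun m => ρ * m := by
  have hlin : Tendsto (fun m : ℕ => ‖ρ * m‖) atTop atTop := by
    simp only [norm_mul, Real.norm_natCast]
    exact tendsto_natCast_atTop_atTop.const_mul_atTop (norm_pos_iff.mpr hρ)
  rw [funext hf]
  exact IsEquivalent.refl.const_add_of_norm_tendsto_atTop hlin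

lemma isEquivalent_prod_of_affine {ι : Type*} {S : Finset ι} {f : ι → ℕ → ℝ} {ρ : ℝ}
    (hρ : ρ ≠ 0) (hf : ∀ j ∈ S, ∀ m : ℕ, f j m = f j 0 + ρ * m) :
    (fun m => ∏ j ∈ S, f j m) ~[atTop] fun m => (ρ * m) ^ #S := by
  simpa only [prod_const] using
    IsEquivalent.finsetProd fun j hj => isEquivalent_of_affine hρ (hf j hj)

lemma tendsto_div_of_isEquivalent_mul_pow {N D : ℕ → ℝ} {A B : ℝ} {e : ℕ} (hB : B ≠ 0)
    (hN : N ~[atTop] fun m => A * (m : ℝ) ^ e) (hD : D ~[atTop] fun m => B * (m : ℝ) ^ e) :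
    Tendsto (fun m => N m / D m) atTop (𝓝 (A / B)) := by
  refine (hN.div hD).symm.tendsto_nhds (tendsto_const_nhds.congr' ?_)
  filter_upwards [eventually_ne_atTop 0] with m hm
  have : (m : ℝ) ^ e ≠ 0 := pow_ne_zero _ (Nat.cast_ne_zero.mpr hm)
  simp only [Pi.div_apply]
  field_simp

lemma tendsto_of_tendsto_residue_classes {X : Type*} {f : ℕ → X} {l : Filter X} {M : ℕ}
    (hM : 0 < M) (h : ∀ j < M, Tendsto (fun m => f (M * m + j)) atTop l) :
    Tendsto f atTop l := by
  refine tendsto_def.mpr fun U hU => ?_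
  have hall : ∀ᶠ m in atTop, ∀ j ∈ range M, f (M * m + j) ∈ U :=
    (eventually_all_finset _).mpr fun j hj => h j (mem_range.mp hj) hU
  filter_upwards [(Nat.tendsto_div_const_atTop hM.ne').eventually hall] with n hn
  simpa only [Set.mem_preimage, Nat.div_add_mod] using hn (n % M) (mem_range.mpr (Nat.mod_lt n hM))

lemma tendsto_prod_affine_ratio {e : ℕ} {ρ σ : ℝ} (hρ : ρ ≠ 0) (hσ : σ ≠ 0)
    {S₁ S₂ T₁ T₂ : Finset ℕ} (hS : #S₁ + #S₂ = e) (hT : #T₁ + #T₂ = e + 1)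
    {f₀ : ℕ → ℝ} {f₁ f₂ g₁ g₂ : ℕ → ℕ → ℝ}
    (hf₀ : ∀ m : ℕ, f₀ m = f₀ 0 + m)
    (hf₁ : ∀ j ∈ S₁, ∀ m : ℕ, f₁ j m = f₁ j 0 + ρ * m)
    (hf₂ : ∀ j ∈ S₂, ∀ m : ℕ, f₂ j m = f₂ j 0 + ρ * m)
    (hg₁ : ∀ j ∈ T₁, ∀ m : ℕ, g₁ j m = g₁ j 0 + σ * m)
    (hg₂ : ∀ j ∈ T₂, ∀ m : ℕ, g₂ j m = g₂ j 0 + σ * m) :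
    Tendsto (fun m => (f₀ m * (∏ j ∈ S₁, f₁ j m) * (∏ j ∈ S₂, f₂ j m)) /
        ((∏ j ∈ T₁, g₁ j m) * (∏ j ∈ T₂, g₂ j m)))
      atTop (𝓝 (ρ ^ e / σ ^ (e + 1))) := by
  have h₀ : f₀ ~[atTop] fun m => 1 * (m : ℝ) :=
    isEquivalent_of_affine one_ne_zero fun m => by rw [one_mul]; exact hf₀ m
  have hN := (h₀.mul (isEquivalent_prod_of_affine hρ hf₁)).mul
    (isEquivalent_prod_of_affine hρ hf₂)
  have hD := (isEquivalent_prod_of_affine hσ hg₁).mul (isEquivalent_prod_of_affine hσ hg₂)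
  refine tendsto_div_of_isEquivalent_mul_pow (e := e + 1) (pow_ne_zero _ hσ)
    (hN.congr_right (.of_forall fun m => ?_)) (hD.congr_right (.of_forall fun m => ?_))
  · simp only [Pi.mul_apply]
    rw [← hS]
    ring
  · simp only [Pi.mul_apply]
    rw [← hT]
    ring

lemma tendsto_alphaJP (r : ℕ) (hr : 1 ≤ r) (a : ℕ → ℝ) (b : ℝ) :
    Tendsto (fun n => alphaJP r a b n) atTop
      (𝓝 ((r : ℂ) ^ r / ((r : ℂ) + 1) ^ (r + 1))) := by
  have hρ : (r : ℝ) ≠ 0 := by positivity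
  have hσ : (r : ℝ) + 1 ≠ 0 := by positivity
  have hlim : (r : ℂ) ^ r / ((r : ℂ) + 1) ^ (r + 1)
      = (((r : ℝ) ^ r / ((r : ℝ) + 1) ^ (r + 1) : ℝ) : ℂ) := by push_cast; rfl
  rw [hlim]
  refine tendsto_of_tendsto_residue_classes (Nat.succ_pos r) fun i hi => ?_
  refine tendsto_of_tendsto_residue_classes
    (f := fun s => alphaJP r a b ((r + 1) * s + i)) hr fun k hk => ?_
  simp only [alphaJP, Nat.mul_add_mod, Nat.mul_add_div (Nat.succ_pos r), Nat.mul_add_div hr,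
    Nat.mod_eq_of_lt hi, Nat.mod_eq_of_lt hk, Nat.div_eq_of_lt hi, Nat.div_eq_of_lt hk, add_zero]
  by_cases hcase : k + i < r <;>
  · simp only [hcase, if_true, if_false]
    refine tendsto_ofReal_iff.mpr (tendsto_prod_affine_ratio hρ hσ ?_ ?_ ?_ ?_ ?_ ?_ ?_)
    any_goals (simp only [card_range, Nat.card_Icc]; omega)
    all_goals intros; push_cast; ring

def IsUpperHessenberg (Y : ℕ → ℕ → ℂ) : Prop :=
  ∀ p q, p + 1 < q → Y p q = 0

def HasBinomialDiagLimits (L : ℂ) (s : ℕ) (Y : ℕ → ℕ → ℂ) : Prop :=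
  ∀ d, Tendsto (fun n => Y (n + d) (n + 1)) atTop (𝓝 ((s + 1).choose d * L ^ d))

section Bidiagonal

variable {r t : ℕ} {α : ℕ → ℂ} {Y : ℕ → ℕ → ℂ}

lemma bidMul_Lmat_zero (q : ℕ) : bidMul (Lmat r t α) Y 0 q = Y 0 q := by
  simp [bidMul, Lmat]

lemma bidMul_Lmat_succ (p q : ℕ) :
    bidMul (Lmat r t α) Y (p + 1) q = Y (p + 1) q + α ((r + 1) * p + t) * Y p q := by
  rw [bidMul, sum_range_succ, sum_range_succ, sum_eq_single_of_mem p (by simp)]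
  · simp only [Lmat, Nat.left_eq_add, one_ne_zero, ↓reduceIte, Nat.add_left_cancel_iff, one_mul,
      OfNat.ofNat_ne_one, Nat.add_right_cancel_iff, OfNat.ofNat_ne_zero, zero_mul, add_zero]
    ring
  · intro c hc hcp
    have : c < p + 1 := mem_range.mp hc
    simp only [Lmat]
    rw [if_neg (by omega), if_neg (by omega), zero_mul]

lemma IsUpperHessenberg.bidMul_Lmat (hY : IsUpperHessenberg Y) :
    IsUpperHessenberg (bidMul (Lmat r t α) Y) := by
  rintro (_ | p) q hpq
  · rw [bidMul_Lmat_zero, hY 0 q hpq]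
  · rw [bidMul_Lmat_succ, hY _ _ hpq, hY _ _ (by omega), mul_zero, add_zero]

lemma IsUpperHessenberg.bidMul_Lmat_superdiag (hY : IsUpperHessenberg Y) (n : ℕ) :
    bidMul (Lmat r t α) Y n (n + 1) = Y n (n + 1) := by
  rcases n with _ | p
  · exact bidMul_Lmat_zero 1
  · rw [bidMul_Lmat_succ, hY p (p + 1 + 1) (by omega), mul_zero, add_zero]

lemma HasBinomialDiagLimits.bidMul_Lmat {L : ℂ} {s : ℕ} (hα : Tendsto α atTop (𝓝 L))
    (hY : IsUpperHessenberg Y) (hlim : HasBinomialDiagLimits L s Y) :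
    HasBinomialDiagLimits L (s + 1) (bidMul (Lmat r t α) Y) := by
  rintro (_ | e)
  · simpa only [add_zero, Nat.choose_zero_right, hY.bidMul_Lmat_superdiag] using hlim 0
  have hidx : Tendsto (fun n => (r + 1) * (n + e) + t) atTop atTop :=
    tendsto_atTop_mono (fun n => show n ≤ _ by nlinarith) tendsto_id
  have h := (hlim (e + 1)).add ((hα.comp hidx).mul (hlim e))
  rw [Nat.choose_succ_succ' (s + 1) e]
  push_cast
  convert h using 2 with n
  · exact bidMul_Lmat_succ (n + e) (n + 1)
  · ring

end Bidiagonal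

lemma listProd_Umat (r : ℕ) (α : ℕ → ℂ) : listProd [Umat r α] = Umat r α := by
  ext p q
  simp only [listProd, bidMul, mul_ite, mul_one, mul_zero, sum_ite_eq', mem_range]
  split_ifs with h
  · rfl
  · simp only [Umat]
    rw [if_neg (by omega), if_neg (by omega)]

lemma isUpperHessenberg_Umat (r : ℕ) (α : ℕ → ℂ) : IsUpperHessenberg (Umat r α) := by
  intro p q hpq
  simp only [Umat]
  rw [if_neg (by omega), if_neg (by omega)]

lemma hasBinomialDiagLimits_Umat {r : ℕ} {α : ℕ → ℂ} {L : ℂ} (hα : Tendsto α atTop (𝓝 L)) :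
    HasBinomialDiagLimits L 0 (Umat r α) := by
  rintro (_ | _ | e)
  · simp [Umat]
  · have hidx : Tendsto (fun n => (r + 1) * (n + 1)) atTop atTop :=
      tendsto_atTop_mono (fun n => show n ≤ _ by nlinarith) tendsto_id
    simpa [Umat, Function.comp_def] using hα.comp hidx
  · have hzero : ∀ n, Umat r α (n + (e + 2)) (n + 1) = 0 := fun n => by
      simp only [Umat]
      rw [if_neg (by omega), if_neg (by omega)]
    simp [hzero, Nat.choose_eq_zero_of_lt (by omega : 1 < e + 2)]

lemma isUpperHessenberg_listProd (r : ℕ) (α : ℕ → ℂ) (ks : List ℕ) :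
    IsUpperHessenberg (listProd ((ks.map fun k => Lmat r k α) ++ [Umat r α])) := by
  induction ks with
  | nil => simpa [listProd_Umat] using isUpperHessenberg_Umat r α
  | cons t ks ih => exact ih.bidMul_Lmat

lemma hasBinomialDiagLimits_listProd {r : ℕ} {α : ℕ → ℂ} {L : ℂ} (hα : Tendsto α atTop (𝓝 L))
    (ks : List ℕ) :
    HasBinomialDiagLimits L ks.length
      (listProd ((ks.map fun k => Lmat r k α) ++ [Umat r α])) := by
  induction ks with
  | nil => simpa [listProd_Umat] using hasBinomialDiagLimits_Umat hα
  | cons t ks ih => exact ih.bidMul_Lmat hα (isUpperHessenberg_listProd r α ks)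

lemma tendsto_Hprod {r : ℕ} {α : ℕ → ℂ} {L : ℂ} (hα : Tendsto α atTop (𝓝 L)) (k : ℕ) :
    Tendsto (fun n => Hprod r α (n + k) n) atTop
      (𝓝 ((r + 1).choose (k + 1) * L ^ (k + 1))) := by
  have h := hasBinomialDiagLimits_listProd (r := r) hα (List.range' 1 r) (k + 1)
  rw [List.length_range'] at h
  rw [← tendsto_add_atTop_iff_nat 1]
  simpa only [Hprod, add_right_comm _ 1 k, add_assoc] using h

theorem stmt18_general (r : ℕ) (hr : 1 ≤ r) (a : ℕ → ℝ) (b : ℝ) :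
    -- `α_n → r^r/(r+1)^{r+1}`
    Tendsto (fun n => alphaJP r a b n) atTop
      (nhds ((r : ℂ) ^ r / ((r : ℂ) + 1) ^ (r + 1))) ∧
    -- and consequently `γ_n^{[k]} = H_{n+k,n} → C(r+1,k+1)·(r^r/(r+1)^{r+1})^{k+1}`
    (∀ k, k ≤ r →
      Tendsto (fun n => Hprod r (alphaJP r a b) (n + k) n) atTop
        (nhds ((Nat.choose (r + 1) (k + 1) : ℂ)
          * ((r : ℂ) ^ r / ((r : ℂ) + 1) ^ (r + 1)) ^ (k + 1)))) :=
  ⟨tendsto_alphaJP r hr a b, fun k _ => tendsto_Hprod (tendsto_alphaJP r hr a b) k⟩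

theorem stmt18 (r : ℕ) (hr : 1 ≤ r) (a : ℕ → ℝ) (b : ℝ) (ha0 : a 0 = -1)
    (haij : ∀ i j, 1 ≤ i → i ≤ r → 1 ≤ j → j ≤ r → i ≠ j → ∀ z : ℤ, a i - a j ≠ z)
    (hneg : ∀ j, 1 ≤ j → j ≤ r →
      (∀ m : ℕ, a j ≠ -(m + 1 : ℕ)) ∧ (∀ m : ℕ, a j + b + 1 ≠ -(m + 1 : ℕ))) :
    -- `α_n → r^r/(r+1)^{r+1}`
    Tendsto (fun n => alphaJP r a b n) atTop
      (nhds ((r : ℂ) ^ r / ((r : ℂ) + 1) ^ (r + 1))) ∧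
    -- and consequently `γ_n^{[k]} = H_{n+k,n} → C(r+1,k+1)·(r^r/(r+1)^{r+1})^{k+1}`
    (∀ k, k ≤ r →
      Tendsto (fun n => Hprod r (alphaJP r a b) (n + k) n) atTop
        (nhds ((Nat.choose (r + 1) (k + 1) : ℂ)
          * ((r : ℂ) ^ r / ((r : ℂ) + 1) ^ (r + 1)) ^ (k + 1)))) :=
  stmt18_general r hr a b
end
end

section
/- Fix r ≥ 1 and real parameters a_1,…,a_r with a_i − a_j ∉ ℤ for i ≠ j and no a_j a negative integer, and let (α̂_n)_{n∈ℕ} be the coefficients of the bidiagonal factorisation of the Hessenberg recurrence matrix of the multiple Laguerre polynomials of the first kind, given explicitly by α̂_{(r+1)(rm+k)+i} = a*_{k+i+1} − a*_i + m for m ∈ ℕ, 0 ≤ k ≤ r−1, 0 ≤ i ≤ r, where a*_0 := −1 and a*_{rn+j} := a_j + n for n ∈ ℕ, 1 ≤ j ≤ r. Then α̂_n / n → 1/(r(r+1)) as n → ∞, and consequently, for each 0 ≤ k ≤ r, the entries γ̂_n^{[k]} := (L_1⋯L_rU)_{n+k,n} of the Hessenberg matrix built from (α̂_n) satisfy γ̂_n^{[k]}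 / n^{k+1} → C(r+1, k+1) / r^{k+1} as n → ∞, where C(r+1, k+1) is the binomial coefficient. -/
open Polynomial Finset Filter

noncomputable section

/-!
The coefficients are quasi-periodic: `α̂_{n + r(r+1)} = α̂_n + 1`, so `α̂_n = n / (r(r+1)) + O(1)`.
Expanding the product row by row, `(L_j Y)_{n+1,ℓ} = Y_{n+1,ℓ} + α_{(r+1)n+j} Y_{n,ℓ}`, so each factor
`L_j` adds to the `d`-th subdiagonal of `Y` the `(d-1)`-th one weighted by `α̂_{(r+1)n+O(1)} ≈ n/r`;
starting from `U` (subdiagonal `0` of size `≈ n/r`, superdiagonal `1`) this is Pascal's rule, and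
after `r` factors the `k`-th subdiagonal is `≈ C(r+1, k+1) (n/r)^{k+1}`.
-/

open Topology

theorem tendsto_div_natCast_of_add_period {𝕜 : Type*} [RCLike 𝕜] {f : ℕ → 𝕜} {p : ℕ}
    (hp : 0 < p) {s : 𝕜} (hf : ∀ n, f (n + p) = f n + s) :
    Tendsto (fun n : ℕ => f n / n) atTop (𝓝 (s / p)) := by
  set g : ℕ → 𝕜 := fun n => f n - s / p * n with hg_def
  have hp' : (p : 𝕜) ≠ 0 := Nat.cast_ne_zero.2 hp.ne'
  have hg : Function.Periodic g p := fun n => by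
    simp only [hg_def, hf, Nat.cast_add]
    field_simp
    ring
  set B := ∑ t ∈ range p, ‖g t‖
  have hbdd : ∀ n, ‖g n‖ ≤ B := fun n => by
    rw [← hg.map_mod_nat n]
    exact single_le_sum (fun t _ => norm_nonneg (g t)) (mem_range.2 (Nat.mod_lt n hp))
  have hg_div : Tendsto (fun n : ℕ => g n / n) atTop (𝓝 0) := by
    refine squeeze_zero_norm (fun n => ?_) (tendsto_const_div_atTop_nhds_zero_nat B)
    rw [norm_div, RCLike.norm_natCast]
    exact div_le_div_of_nonneg_right (hbdd n) n.cast_nonneg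
  have hlim := hg_div.const_add (s / p)
  rw [add_zero] at hlim
  refine hlim.congr' ?_
  filter_upwards [eventually_ne_atTop 0] with n hn
  have hn' : (n : 𝕜) ≠ 0 := Nat.cast_ne_zero.2 hn
  simp only [hg_def]
  field_simp
  ring

theorem alphaLag_add_period (r : ℕ) (hr : 1 ≤ r) (a : ℕ → ℝ) (n : ℕ) :
    alphaLag r a (n + r * (r + 1)) = alphaLag r a n + 1 := by
  have hmod : (n + r * (r + 1)) % (r + 1) = n % (r + 1) := by
    rw [Nat.add_mul_mod_self_right]
  have hdiv : (n + r * (r + 1)) / (r + 1) = n / (r + 1) + r := by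
    rw [Nat.add_mul_div_right _ _ (Nat.succ_pos r)]
  have hr0 : 0 < r := hr
  simp only [alphaLag, hmod, hdiv, Nat.add_mod_right, Nat.add_div_right _ hr0]
  push_cast
  ring

theorem tendsto_alphaLag_div_natCast (r : ℕ) (hr : 1 ≤ r) (a : ℕ → ℝ) :
    Tendsto (fun n : ℕ => alphaLag r a n / n) atTop (𝓝 (1 / ((r : ℂ) * ((r : ℂ) + 1)))) := by
  have h := tendsto_div_natCast_of_add_period (Nat.mul_pos hr (Nat.succ_pos r))
    (alphaLag_add_period r hr a)
  push_cast at h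
  exact h

theorem tendsto_comp_mul_add_div_natCast_add_one {α : ℕ → ℂ} {c : ℂ}
    (hα : Tendsto (fun n : ℕ => α n / n) atTop (𝓝 c)) {p : ℕ} (hp : 0 < p) (q : ℕ) :
    Tendsto (fun n : ℕ => α (p * n + q) / ((n : ℂ) + 1)) atTop (𝓝 (p * c)) := by
  have hN : Tendsto (fun n : ℕ => p * n + q) atTop atTop :=
    tendsto_atTop_mono (fun n => Nat.le_add_right_of_le (Nat.le_mul_of_pos_left n hp)) tendsto_id
  have hratio : Tendsto (fun n : ℕ => ((p * n + q : ℕ) : ℂ) / ((n : ℂ) + 1)) atTop (𝓝 p) := by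
    have h := tendsto_add_mul_div_add_mul_atTop_nhds (q : ℂ) 1 (p : ℂ) one_ne_zero
    rw [div_one] at h
    refine h.congr fun n => ?_
    push_cast
    ring
  rw [mul_comm]
  refine ((hα.comp hN).mul hratio).congr' ?_
  filter_upwards [eventually_ge_atTop 1] with n hn
  have hN0 : ((p * n + q : ℕ) : ℂ) ≠ 0 := Nat.cast_ne_zero.2 (by nlinarith)
  exact div_mul_div_cancel₀ hN0

/-- `L_{j₁} ⋯ L_{jₜ} U` for `js = [j₁, …, jₜ]`. -/
def bidiagProd (r : ℕ) (α : ℕ → ℂ) (js : List ℕ) : ℕ → ℕ → ℂ :=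
  listProd ((js.map fun j => Lmat r j α) ++ [Umat r α])

section bidiagProd

variable (r : ℕ) (α : ℕ → ℂ)

theorem bidiagProd_nil (n ℓ : ℕ) : bidiagProd r α [] n ℓ = Umat r α n ℓ := by
  simp only [bidiagProd, List.map_nil, List.nil_append, listProd, bidMul, mul_ite, mul_one,
    mul_zero, sum_ite_eq', mem_range]
  split_ifs with hℓ
  · rfl
  · simp [Umat, show ℓ ≠ n by omega, show ℓ ≠ n + 1 by omega]

theorem bidiagProd_cons_zero (j : ℕ) (js : List ℕ) (ℓ : ℕ) :
    bidiagProd r α (j :: js) 0 ℓ = bidiagProd r α js 0 ℓ := by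
  simp [bidiagProd, listProd, bidMul, Lmat]

theorem bidiagProd_cons_succ (j : ℕ) (js : List ℕ) (n ℓ : ℕ) :
    bidiagProd r α (j :: js) (n + 1) ℓ
      = bidiagProd r α js (n + 1) ℓ + α ((r + 1) * n + j) * bidiagProd r α js n ℓ := by
  simp only [bidiagProd, List.map_cons, List.cons_append, listProd, bidMul]
  rw [sum_range_succ, sum_range_succ, sum_eq_single n]
  · simp only [Lmat, Nat.left_eq_add, one_ne_zero, ↓reduceIte, Nat.add_left_cancel_iff, one_mul,
      OfNat.ofNat_ne_one, Nat.add_right_cancel_iff, OfNat.ofNat_ne_zero, zero_mul, add_zero]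
    ring
  · intro x hx hxn
    simp [Lmat, (mem_range.1 hx).ne, show n ≠ x by omega]
  · simp

theorem bidiagProd_eq_zero_of_lt (js : List ℕ) {n ℓ : ℕ} (h : n + 1 < ℓ) :
    bidiagProd r α js n ℓ = 0 := by
  induction js generalizing n with
  | nil => simp [bidiagProd_nil, Umat, show ℓ ≠ n by omega, show ℓ ≠ n + 1 by omega]
  | cons j js ih =>
    cases n with
    | zero => rw [bidiagProd_cons_zero, ih h]
    | succ n => rw [bidiagProd_cons_succ, ih h, ih (by omega), mul_zero, add_zero]

theorem bidiagProd_superdiag (js : List ℕ) (n : ℕ) : bidiagProd r α js n (n + 1) = 1 := by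
  induction js generalizing n with
  | nil => simp [bidiagProd_nil, Umat]
  | cons j js ih =>
    cases n with
    | zero => rw [bidiagProd_cons_zero, ih]
    | succ n =>
      rw [bidiagProd_cons_succ, ih, bidiagProd_eq_zero_of_lt r α js (by omega), mul_zero, add_zero]

variable {α}

/-- Entry `(n + d, n + 1)` lies on the `(d-1)`-th subdiagonal; the shift makes `d = 0` the
superdiagonal of ones, so that Pascal's rule applies uniformly in `d`. -/
theorem tendsto_bidiagProd {c : ℂ}
    (hα : Tendsto (fun n : ℕ => α n / n) atTop (𝓝 c)) (js : List ℕ) (d : ℕ) :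
    Tendsto (fun n : ℕ => bidiagProd r α js (n + d) (n + 1) / ((n : ℂ) + 1) ^ d) atTop
      (𝓝 ((js.length + 1).choose d * ((r + 1) * c) ^ d)) := by
  have hshift := tendsto_comp_mul_add_div_natCast_add_one hα (Nat.succ_pos r)
  push_cast at hshift
  induction js generalizing d with
  | nil =>
    rcases d with _ | _ | d
    · simp [bidiagProd_superdiag]
    · simpa [bidiagProd_nil, Umat, mul_add] using hshift (r + 1)
    · simp [bidiagProd_nil, Umat, Nat.choose_eq_zero_of_lt (show 1 < d + 2 by omega)]
  | cons j js ih =>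
    rcases d with _ | d
    · simp [bidiagProd_superdiag]
    have hrec : ∀ n : ℕ, bidiagProd r α (j :: js) (n + (d + 1)) (n + 1) / ((n : ℂ) + 1) ^ (d + 1)
        = bidiagProd r α js (n + (d + 1)) (n + 1) / ((n : ℂ) + 1) ^ (d + 1)
          + α ((r + 1) * n + ((r + 1) * d + j)) / ((n : ℂ) + 1)
            * (bidiagProd r α js (n + d) (n + 1) / ((n : ℂ) + 1) ^ d) := fun n => by
      rw [← add_assoc, bidiagProd_cons_succ, show (r + 1) * (n + d) + j
        = (r + 1) * n + ((r + 1) * d + j) by ring]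
      field_simp
      ring
    simp_rw [hrec]
    convert (ih (d + 1)).add ((hshift _).mul (ih d)) using 2
    rw [List.length_cons, Nat.choose_succ_succ']
    push_cast
    ring

end bidiagProd

theorem stmt19_general (r : ℕ) (hr : 1 ≤ r) (a : ℕ → ℝ) :
    -- `α̂_n / n → 1/(r(r+1))`
    Tendsto (fun n : ℕ => alphaLag r a n / (n : ℂ)) atTop
      (nhds (1 / ((r : ℂ) * ((r : ℂ) + 1)))) ∧
    -- and consequently `γ̂_n^{[k]} / n^{k+1} → C(r+1,k+1)/r^{k+1}`
    (∀ k, k ≤ r →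
      Tendsto (fun n : ℕ => Hprod r (alphaLag r a) (n + k) n / (n : ℂ) ^ (k + 1)) atTop
        (nhds ((Nat.choose (r + 1) (k + 1) : ℂ) / (r : ℂ) ^ (k + 1)))) := by
  have hα := tendsto_alphaLag_div_natCast r hr a
  refine ⟨hα, fun k _ => ?_⟩
  rw [← tendsto_add_atTop_iff_nat 1]
  have hH := tendsto_bidiagProd r hα (List.range' 1 r) (k + 1)
  have hr0 : (r : ℂ) ≠ 0 := Nat.cast_ne_zero.2 (by omega)
  convert hH using 2 with n
  · rw [show n + 1 + k = n + (k + 1) by ring]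
    push_cast
    rfl
  · have hr1 : (r : ℂ) + 1 ≠ 0 := Nat.cast_add_one_ne_zero r
    rw [List.length_range', show ((r : ℂ) + 1) * (1 / (r * (r + 1))) = 1 / r by field_simp,
      one_div_pow, mul_one_div]

theorem stmt19 (r : ℕ) (hr : 1 ≤ r) (a : ℕ → ℝ)
    (haij : ∀ i j, 1 ≤ i → i ≤ r → 1 ≤ j → j ≤ r → i ≠ j → ∀ z : ℤ, a i - a j ≠ z)
    (hneg : ∀ j, 1 ≤ j → j ≤ r → ∀ m : ℕ, a j ≠ -(m + 1 : ℕ)) :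
    -- `α̂_n / n → 1/(r(r+1))`
    Tendsto (fun n : ℕ => alphaLag r a n / (n : ℂ)) atTop
      (nhds (1 / ((r : ℂ) * ((r : ℂ) + 1)))) ∧
    -- and consequently `γ̂_n^{[k]} / n^{k+1} → C(r+1,k+1)/r^{k+1}`
    (∀ k, k ≤ r →
      Tendsto (fun n : ℕ => Hprod r (alphaLag r a) (n + k) n / (n : ℂ) ^ (k + 1)) atTop
        (nhds ((Nat.choose (r + 1) (k + 1) : ℂ) / (r : ℂ) ^ (k + 1)))) :=
  stmt19_general r hr a
end
end
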